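/- arXiv:2311.12294 — 3 statements merged into one kernel-verified Lean document; each statement's English description precedes it below -/
import Mathlib

section
/- For any d ≥ 1, c > 0, α ∈ (0,2], and t > 0, the iterated integral ∫_0^t ∫_0^s ∫_{ℝ^d} exp(-(s-r)(|ξ|² + c|ξ|^α)) dξ dr ds is finite if and only if d = 1. -/
/-!
With `u = s - r`, the inner integral `K(u) = ∫ exp (-u (‖ξ‖² + c‖ξ‖^α)) dξ` is comparable to the
Gaussian integral `(π / u)^(d/2)` uniformly for `0 < u < t`: from above because `c‖ξ‖^α ≥ 0`, from
below because `‖ξ‖^α ≤ 1 + ‖ξ‖²` for `α ≤ 2`. Hence the triple integral is finite iff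
`∫₀ᵗ ∫₀ˢ u^(-d/2) du ds` is, i.e. iff `d / 2 < 1`.
-/

open MeasureTheory Real Set Module
open scoped ENNReal

lemma lintegral_ne_top_iff_of_le_of_le {X : Type*} [MeasurableSpace X] {μ : Measure X}
    {f g : X → ℝ≥0∞} {a b : ℝ≥0∞} (ha : a ≠ 0) (hb : b ≠ ∞)
    (hlow : ∀ᵐ x ∂μ, a * f x ≤ g x) (hup : ∀ᵐ x ∂μ, g x ≤ b * f x) :
    ∫⁻ x, g x ∂μ ≠ ∞ ↔ ∫⁻ x, f x ∂μ ≠ ∞ := by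
  constructor
  · intro hg
    refine (ENNReal.lt_top_of_mul_ne_top_right ?_ ha).ne
    exact ne_top_of_le_ne_top hg ((lintegral_const_mul_le a f).trans (lintegral_mono_ae hlow))
  · intro hf
    refine ne_top_of_le_ne_top (ENNReal.mul_ne_top hb hf) ?_
    rw [← lintegral_const_mul' b f hb]
    exact lintegral_mono_ae hup

lemma integrableOn_prod_univ_iff_lintegral_ne_top {X Y : Type*} [MeasurableSpace X]
    [MeasurableSpace Y] {μ : Measure X} {ν : Measure Y} [SFinite μ] [SFinite ν]
    {f : X × Y → ℝ} (hf : Measurable f) (hf0 : 0 ≤ f) (s : Set X) :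
    IntegrableOn f (s ×ˢ univ) (μ.prod ν) ↔
      ∫⁻ x in s, ∫⁻ y, ENNReal.ofReal (f (x, y)) ∂ν ∂μ ≠ ∞ := by
  rw [IntegrableOn, ← Measure.prod_restrict, Measure.restrict_univ,
    ← lintegral_ofReal_ne_top_iff_integrable hf.aestronglyMeasurable (.of_forall hf0),
    lintegral_prod _ hf.ennreal_ofReal.aemeasurable]

section TimeTriangle

def timeTriangle (t : ℝ) : Set (ℝ × ℝ) := {p | 0 < p.2 ∧ p.2 < p.1 ∧ p.1 < t}

lemma measurableSet_timeTriangle (t : ℝ) : MeasurableSet (timeTriangle t) :=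
  (measurableSet_lt measurable_const measurable_snd).inter
    ((measurableSet_lt measurable_snd measurable_fst).inter
      (measurableSet_lt measurable_fst measurable_const))

lemma lintegral_timeTriangle_comp_sub (t : ℝ) {h : ℝ → ℝ≥0∞} (hh : Measurable h) :
    ∫⁻ p in timeTriangle t, h (p.1 - p.2) = ∫⁻ s in Ioo 0 t, ∫⁻ u in Ioo 0 s, h u := by
  have hind : ∀ s r, (timeTriangle t).indicator (fun p ↦ h (p.1 - p.2)) (s, r) =
      (Ioo 0 t).indicator (fun s ↦ (Ioo 0 s).indicator h (s - r)) s := by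
    intro s r
    simp only [indicator_apply, timeTriangle, mem_ofPred_eq, mem_Ioo]
    split_ifs <;> grind
  calc ∫⁻ p in timeTriangle t, h (p.1 - p.2)
      = ∫⁻ s, ∫⁻ r, (timeTriangle t).indicator (fun p ↦ h (p.1 - p.2)) (s, r) := by
        rw [← lintegral_indicator (measurableSet_timeTriangle t), Measure.volume_eq_prod,
          lintegral_prod _ (Measurable.aemeasurable ?_)]
        exact (hh.comp (by fun_prop)).indicator (measurableSet_timeTriangle t)
    _ = ∫⁻ s, (Ioo 0 t).indicator (fun s ↦ ∫⁻ r, (Ioo 0 s).indicator h (s - r)) s := by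
        simp_rw [hind]
        congr 1
        funext s
        by_cases hs : s ∈ Ioo 0 t <;> simp [hs]
    _ = ∫⁻ s in Ioo 0 t, ∫⁻ u in Ioo 0 s, h u := by
        simp_rw [lintegral_indicator measurableSet_Ioo,
          lintegral_sub_left_eq_self ((Ioo 0 _).indicator h), lintegral_indicator measurableSet_Ioo]

lemma lintegral_Ioo_rpow_ne_top_iff {s : ℝ} (hs : 0 < s) (a : ℝ) :
    ∫⁻ u in Ioo 0 s, ENNReal.ofReal (u ^ a) ≠ ∞ ↔ -1 < a := by
  rw [lintegral_ofReal_ne_top_iff_integrable (by fun_prop)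
    (ae_restrict_of_forall_mem measurableSet_Ioo fun u hu ↦ rpow_nonneg hu.1.le a),
    ← IntegrableOn, intervalIntegral.integrableOn_Ioo_rpow_iff hs]

lemma lintegral_timeTriangle_rpow_ne_top_iff {t : ℝ} (ht : 0 < t) (a : ℝ) :
    ∫⁻ p in timeTriangle t, ENNReal.ofReal ((p.1 - p.2) ^ a) ≠ ∞ ↔ -1 < a := by
  rw [lintegral_timeTriangle_comp_sub t (h := fun u ↦ ENNReal.ofReal (u ^ a)) (by fun_prop)]
  constructor
  · intro hfin
    by_contra! ha
    have hinner : ∀ s ∈ Ioo 0 t, ∫⁻ u in Ioo 0 s, ENNReal.ofReal (u ^ a) = ∞ := fun s hs ↦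
      of_not_not fun hne ↦ ha.not_gt ((lintegral_Ioo_rpow_ne_top_iff hs.1 a).1 hne)
    rw [setLIntegral_congr_fun measurableSet_Ioo hinner, setLIntegral_const, Real.volume_Ioo,
      ENNReal.top_mul (by simpa using ht)] at hfin
    exact hfin rfl
  · intro ha
    have hbound : ∀ s ∈ Ioo 0 t, ∫⁻ u in Ioo 0 s, ENNReal.ofReal (u ^ a) ≤
        ∫⁻ u in Ioo 0 t, ENNReal.ofReal (u ^ a) := fun s hs ↦
      lintegral_mono_set (Ioo_subset_Ioo_right hs.2.le)
    refine ne_top_of_le_ne_top ?_ (setLIntegral_mono' measurableSet_Ioo hbound)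
    rw [setLIntegral_const, Real.volume_Ioo]
    exact ENNReal.mul_ne_top ((lintegral_Ioo_rpow_ne_top_iff ht a).2 ha) ENNReal.ofReal_ne_top

end TimeTriangle

lemma rpow_le_one_add_sq {x α : ℝ} (hx : 0 ≤ x) (hα : α ∈ Icc (0 : ℝ) 2) :
    x ^ α ≤ 1 + x ^ 2 := by
  rcases le_total x 1 with h | h
  · linarith [rpow_le_one hx h hα.1, sq_nonneg x]
  · have := rpow_le_rpow_of_exponent_le h hα.2
    rw [rpow_two] at this
    linarith

lemma div_mul_rpow {x b u : ℝ} (hx : 0 ≤ x) (hb : 0 ≤ b) (hu : 0 ≤ u) (p : ℝ) :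
    (x / (b * u)) ^ p = (x / b) ^ p * u ^ (-p) := by
  rw [← div_div, div_rpow (div_nonneg hx hb) hu, rpow_neg hu, div_eq_mul_inv]

section CharFunLIntegral

variable {V : Type*} [NormedAddCommGroup V] [InnerProductSpace ℝ V] [FiniteDimensional ℝ V]
  [MeasurableSpace V] [BorelSpace V]

lemma lintegral_exp_neg_mul_sq_norm {b : ℝ} (hb : 0 < b) :
    ∫⁻ v : V, ENNReal.ofReal (exp (-b * ‖v‖ ^ 2)) =
      ENNReal.ofReal ((π / b) ^ (finrank ℝ V / 2 : ℝ)) := by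
  have hval := GaussianFourier.integral_rexp_neg_mul_sq_norm (V := V) hb
  have hint : Integrable (fun v : V ↦ exp (-b * ‖v‖ ^ 2)) :=
    .of_integral_ne_zero (hval ▸ (rpow_pos_of_pos (div_pos pi_pos hb) _).ne')
  rw [← hval, ofReal_integral_eq_lintegral_ofReal hint (.of_forall fun _ ↦ (exp_pos _).le)]

variable (V) in
/-- `ξ ↦ exp (-u (‖ξ‖² + c‖ξ‖^α))` is the characteristic function of `X_u`, so by Fourier
inversion this is `(2π)^d p_u(0)`. -/
noncomputable def charFunLIntegral (c α u : ℝ) : ℝ≥0∞ :=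
  ∫⁻ ξ : V, ENNReal.ofReal (exp (-u * (‖ξ‖ ^ 2 + c * ‖ξ‖ ^ α)))

lemma charFunLIntegral_le {c : ℝ} (hc : 0 ≤ c) (α : ℝ) {u : ℝ} (hu : 0 < u) :
    charFunLIntegral V c α u ≤ ENNReal.ofReal (π ^ (finrank ℝ V / 2 : ℝ)) *
      ENNReal.ofReal (u ^ (-(finrank ℝ V / 2 : ℝ))) := by
  calc charFunLIntegral V c α u ≤ ∫⁻ ξ : V, ENNReal.ofReal (exp (-u * ‖ξ‖ ^ 2)) := by
        refine lintegral_mono fun ξ ↦ ENNReal.ofReal_le_ofReal (exp_le_exp.2 ?_)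
        have : 0 ≤ u * (c * ‖ξ‖ ^ α) := by positivity
        linarith
    _ = _ := by
        rw [lintegral_exp_neg_mul_sq_norm hu, ← ENNReal.ofReal_mul (by positivity),
          div_rpow pi_pos.le hu.le, rpow_neg hu.le, div_eq_mul_inv]

lemma le_charFunLIntegral {c α t : ℝ} (hc : 0 ≤ c) (hα : α ∈ Icc (0 : ℝ) 2) {u : ℝ}
    (hu : u ∈ Ioo 0 t) :
    ENNReal.ofReal (exp (-(c * t))) * ENNReal.ofReal ((π / (1 + c)) ^ (finrank ℝ V / 2 : ℝ)) *
      ENNReal.ofReal (u ^ (-(finrank ℝ V / 2 : ℝ))) ≤ charFunLIntegral V c α u := by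
  have hb : 0 < (1 + c) * u := by nlinarith [hu.1]
  calc _ ≤ ENNReal.ofReal (exp (-(c * u))) *
          ENNReal.ofReal ((π / ((1 + c) * u)) ^ (finrank ℝ V / 2 : ℝ)) := by
        rw [div_mul_rpow pi_pos.le (by linarith) hu.1.le, ENNReal.ofReal_mul (by positivity),
          mul_assoc]
        gcongr
        nlinarith [hu.2]
    _ = ∫⁻ ξ : V, ENNReal.ofReal (exp (-(c * u))) *
          ENNReal.ofReal (exp (-((1 + c) * u) * ‖ξ‖ ^ 2)) := by
        rw [lintegral_const_mul' _ _ ENNReal.ofReal_ne_top, lintegral_exp_neg_mul_sq_norm hb]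
    _ ≤ charFunLIntegral V c α u := by
        refine lintegral_mono fun ξ ↦ ?_
        rw [← ENNReal.ofReal_mul (exp_pos _).le, ← exp_add]
        refine ENNReal.ofReal_le_ofReal (exp_le_exp.2 ?_)
        have := mul_le_mul_of_nonneg_left (rpow_le_one_add_sq (norm_nonneg ξ) hα)
          (mul_nonneg hu.1.le hc)
        nlinarith

lemma lintegral_timeTriangle_charFunLIntegral_ne_top_iff {c α t : ℝ} (hc : 0 ≤ c)
    (hα : α ∈ Icc (0 : ℝ) 2) (ht : 0 < t) :
    ∫⁻ p in timeTriangle t, charFunLIntegral V c α (p.1 - p.2) ≠ ∞ ↔ finrank ℝ V < 2 := by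
  have hsub : ∀ p ∈ timeTriangle t, p.1 - p.2 ∈ Ioo 0 t := fun p hp ↦
    ⟨sub_pos.2 hp.2.1, by linarith [hp.1, hp.2.2]⟩
  rw [lintegral_ne_top_iff_of_le_of_le
      (f := fun p ↦ ENNReal.ofReal ((p.1 - p.2) ^ (-(finrank ℝ V / 2 : ℝ))))
      (by positivity) ENNReal.ofReal_ne_top
      (ae_restrict_of_forall_mem (measurableSet_timeTriangle t) fun p hp ↦
        le_charFunLIntegral hc hα (hsub p hp))
      (ae_restrict_of_forall_mem (measurableSet_timeTriangle t) fun p hp ↦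
        charFunLIntegral_le hc α (hsub p hp).1),
    lintegral_timeTriangle_rpow_ne_top_iff ht, neg_lt_neg_iff, div_lt_one two_pos]
  exact Nat.cast_lt_ofNat

end CharFunLIntegral

/-- `∫₀ᵗ∫₀ˢ∫_{ℝ^d} exp(-(s-r)(|ξ|² + c|ξ|^α)) dξ dr ds < ∞` iff `d = 1`. -/
theorem integrable_stable_kernel_iff (d : ℕ) (hd : 1 ≤ d) (c α t : ℝ) (hc : 0 < c)
    (hα : α ∈ Set.Ioc (0 : ℝ) 2) (ht : 0 < t) :
    IntegrableOn
      (fun x : (ℝ × ℝ) × EuclideanSpace ℝ (Fin d) =>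
        Real.exp (-(x.1.1 - x.1.2) * (‖x.2‖ ^ 2 + c * ‖x.2‖ ^ α)))
      ({p : ℝ × ℝ | 0 < p.2 ∧ p.2 < p.1 ∧ p.1 < t} ×ˢ Set.univ) ↔ d = 1 := by
  rw [Measure.volume_eq_prod, integrableOn_prod_univ_iff_lintegral_ne_top (by fun_prop)
    (fun _ ↦ (exp_pos _).le)]
  refine (lintegral_timeTriangle_charFunLIntegral_ne_top_iff hc.le
    (Ioc_subset_Icc_self hα) ht).trans ?_
  rw [finrank_euclideanSpace_fin]
  omega
end

section
/- Let β ∈ (0,1) and let ψ_δ(t) = δ^{-1} 1_{[0,δ]}(t). There exists a constant C depending only on β such that for all δ > 0 and all s, r ≥ 0 with s ≠ r, ∫_0^∞ ∫_0^∞ ψ_δ(u - s) ψ_δ(v - r) |u - v|^{-β} du dv ≤ C |s - r|^{-β}. -/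
/-!
On the support of the integrand `u ∈ [s, s + δ]` and `v ∈ [r, r + δ]`. If `2δ ≤ |s - r|`, then
`|u - v| ≥ |s - r| / 2` there, so the kernel is at most `2^β |s - r|^{-β}`. Otherwise
`δ^{-β} ≤ 2^β |s - r|^{-β}`, and the integral of `|u - v|^{-β}` over any set of measure at most `δ`
is at most `(1 + 2 / (1 - β)) δ^{1-β}`: where `|u - v| ≤ δ` the kernel is integrable since
`β < 1`, and elsewhere it is at most `δ^{-β}`.
-/

open MeasureTheory Set

section

variable {β δ : ℝ}

lemma rpow_neg_le_two_rpow_mul_rpow_neg (hβ : 0 ≤ β) {d x : ℝ} (hd : 0 < d) (hx : d / 2 ≤ x) :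
    x ^ (-β) ≤ 2 ^ β * d ^ (-β) :=
  calc x ^ (-β) ≤ (d / 2) ^ (-β) := Real.rpow_le_rpow_of_nonpos (by positivity) hx (by linarith)
    _ = 2 ^ β * d ^ (-β) := by
      rw [Real.div_rpow hd.le zero_le_two, Real.rpow_neg zero_le_two, div_inv_eq_mul, mul_comm]

lemma integral_indicator_Iic_rpow_neg_abs (hβ : β < 1) (hδ : 0 ≤ δ) :
    ∫ t, (Iic δ).indicator (fun t => t ^ (-β)) |t| = 2 * (δ ^ (1 - β) / (1 - β)) := by
  rw [integral_comp_abs, setIntegral_indicator measurableSet_Iic, Ioi_inter_Iic,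
    ← intervalIntegral.integral_of_le hδ, integral_rpow (Or.inl (by linarith)),
    Real.zero_rpow (by linarith), sub_zero, neg_add_eq_sub]

lemma setIntegral_abs_sub_rpow_neg_le (hβ0 : 0 ≤ β) (hβ1 : β < 1) (hδ : 0 < δ) (u : ℝ)
    {S : Set ℝ} (hS : volume S ≤ ENNReal.ofReal δ) :
    ∫ v in S, |u - v| ^ (-β) ≤ (1 + 2 / (1 - β)) * δ ^ (1 - β) := by
  set T : ℝ → ℝ := fun t => (Iic δ).indicator (fun t => t ^ (-β)) |t|
  have hT : ∫ t, T t = 2 * (δ ^ (1 - β) / (1 - β)) :=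
    integral_indicator_Iic_rpow_neg_abs hβ1 hδ.le
  have hT0 : ∀ t, 0 ≤ T t := fun t => by
    simp only [T, indicator_apply]
    split_ifs <;> positivity
  have hTint : Integrable T := .of_integral_ne_zero (by rw [hT]; positivity)
  have hkernel : ∀ v, |u - v| ^ (-β) ≤ T (u - v) + δ ^ (-β) := fun v => by
    by_cases hv : |u - v| ≤ δ
    · simp only [T, indicator_of_mem (show |u - v| ∈ Iic δ from hv)]
      exact le_add_of_nonneg_right (by positivity)
    · simp only [T, indicator_of_notMem (show |u - v| ∉ Iic δ from hv), zero_add]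
      exact Real.rpow_le_rpow_of_nonpos hδ (not_le.1 hv).le (by linarith)
  have hSfin : volume S < ⊤ := hS.trans_lt ENNReal.ofReal_lt_top
  have hSreal : volume.real S ≤ δ := ENNReal.toReal_le_of_le_ofReal hδ.le hS
  calc ∫ v in S, |u - v| ^ (-β)
      ≤ ∫ v in S, (T (u - v) + δ ^ (-β)) :=
        integral_mono_of_nonneg (ae_of_all _ fun v => by positivity)
          ((hTint.comp_sub_left u).integrableOn.add (integrableOn_const hSfin.ne))
          (ae_of_all _ hkernel)
    _ = (∫ v in S, T (u - v)) + δ ^ (-β) * volume.real S := by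
        rw [integral_add (hTint.comp_sub_left u).integrableOn (integrableOn_const hSfin.ne),
          setIntegral_const, smul_eq_mul, mul_comm]
    _ ≤ (∫ t, T t) + δ ^ (-β) * δ := by
        gcongr
        exact (setIntegral_le_integral (hTint.comp_sub_left u) (ae_of_all _ fun v => hT0 _))
          |>.trans_eq (integral_sub_left_eq_self T volume u)
    _ = (1 + 2 / (1 - β)) * δ ^ (1 - β) := by
        rw [hT, ← Real.rpow_add_one hδ.ne', neg_add_eq_sub]
        ring

lemma setIntegral_le_mul_of_abs_le {g : ℝ → ℝ} {S : Set ℝ} {M : ℝ} (hδ : 0 ≤ δ)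
    (hS : volume S ≤ ENNReal.ofReal δ) (hM : 0 ≤ M) (hg : ∀ x ∈ S, |g x| ≤ M) :
    ∫ x in S, g x ≤ M * δ :=
  calc ∫ x in S, g x ≤ ‖∫ x in S, g x‖ := Real.le_norm_self _
    _ ≤ M * volume.real S :=
      norm_setIntegral_le_of_norm_le_const (hS.trans_lt ENNReal.ofReal_lt_top) hg
    _ ≤ M * δ := by gcongr; exact ENNReal.toReal_le_of_le_ofReal hδ hS

lemma abs_sub_ge_half_of_mem_Icc {s r u v : ℝ} (hu : u ∈ Icc s (s + δ)) (hv : v ∈ Icc r (r + δ))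
    (hsr : 2 * δ ≤ |s - r|) : |s - r| / 2 ≤ |u - v| := by
  obtain ⟨hu₁, hu₂⟩ := hu
  obtain ⟨hv₁, hv₂⟩ := hv
  cases abs_cases (s - r) <;> cases abs_cases (u - v) <;> linarith

lemma volume_le_ofReal_of_subset_Icc {S : Set ℝ} {a : ℝ} (hS : S ⊆ Icc a (a + δ)) :
    volume S ≤ ENNReal.ofReal δ :=
  (measure_mono hS).trans_eq (by rw [Real.volume_Icc, add_sub_cancel_left])

lemma inv_mul_setIntegral_abs_sub_rpow_neg_le (hβ0 : 0 ≤ β) (hβ1 : β < 1) (hδ : 0 < δ)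
    {s r u : ℝ} (hsr : s ≠ r) (hu : u ∈ Icc s (s + δ)) {S : Set ℝ} (hS : S ⊆ Icc r (r + δ)) :
    δ⁻¹ * ∫ v in S, |u - v| ^ (-β) ≤ (1 + 2 / (1 - β)) * 2 ^ β * |s - r| ^ (-β) := by
  have hd : 0 < |s - r| := abs_pos.2 (sub_ne_zero.2 hsr)
  have hC : 1 ≤ 1 + 2 / (1 - β) := le_add_of_nonneg_right (div_nonneg zero_le_two (by linarith))
  have hSvol := volume_le_ofReal_of_subset_Icc hS
  rw [inv_mul_le_iff₀ hδ]
  rcases le_or_gt (2 * δ) |s - r| with hfar | hnear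
  · calc ∫ v in S, |u - v| ^ (-β) ≤ 2 ^ β * |s - r| ^ (-β) * δ :=
          setIntegral_le_mul_of_abs_le hδ.le hSvol (by positivity) fun v hv => by
            rw [abs_of_nonneg (by positivity)]
            exact rpow_neg_le_two_rpow_mul_rpow_neg hβ0 hd
              (abs_sub_ge_half_of_mem_Icc hu (hS hv) hfar)
      _ ≤ δ * ((1 + 2 / (1 - β)) * 2 ^ β * |s - r| ^ (-β)) := by
          rw [mul_comm δ, mul_assoc (1 + _)]
          exact mul_le_mul_of_nonneg_right (le_mul_of_one_le_left (by positivity) hC) hδ.le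
  · calc ∫ v in S, |u - v| ^ (-β) ≤ (1 + 2 / (1 - β)) * δ ^ (1 - β) :=
          setIntegral_abs_sub_rpow_neg_le hβ0 hβ1 hδ u hSvol
      _ = δ * ((1 + 2 / (1 - β)) * δ ^ (-β)) := by
          rw [sub_eq_neg_add, Real.rpow_add_one hδ.ne']; ring
      _ ≤ δ * ((1 + 2 / (1 - β)) * 2 ^ β * |s - r| ^ (-β)) := by
          rw [mul_assoc (1 + _)]
          gcongr
          exact rpow_neg_le_two_rpow_mul_rpow_neg hβ0 hd (by linarith)

end

lemma setIntegral_ite_sub_mem_Icc_mul (t : Set ℝ) (g : ℝ → ℝ) (a δ : ℝ) :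
    ∫ x in t, (if x - a ∈ Icc 0 δ then δ⁻¹ else 0) * g x = δ⁻¹ * ∫ x in t ∩ Icc a (a + δ), g x := by
  have hψ : ∀ x, (if x - a ∈ Icc 0 δ then δ⁻¹ else 0) * g x
      = (Icc a (a + δ)).indicator (fun x => δ⁻¹ * g x) x := fun x => by
    simp only [indicator_apply, mem_Icc, sub_nonneg, sub_le_iff_le_add']
    split_ifs <;> simp
  simp_rw [hψ]
  rw [setIntegral_indicator measurableSet_Icc, integral_const_mul]

/-- Averaging the singular kernel `|u-v|^{-β}` against the approximate identity
`ψ_δ = δ⁻¹ 1_{[0,δ]}` is controlled by `C |s-r|^{-β}`. -/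
theorem approx_identity_singular_kernel_bound (β : ℝ) (hβ : β ∈ Set.Ioo (0 : ℝ) 1) :
    ∃ C > 0, ∀ δ > (0 : ℝ), ∀ s r : ℝ, 0 ≤ s → 0 ≤ r → s ≠ r →
      (∫ u in Set.Ioi (0 : ℝ), ∫ v in Set.Ioi (0 : ℝ),
          (if u - s ∈ Set.Icc (0 : ℝ) δ then δ⁻¹ else 0) *
            (if v - r ∈ Set.Icc (0 : ℝ) δ then δ⁻¹ else 0) * |u - v| ^ (-β))
        ≤ C * |s - r| ^ (-β) := by
  obtain ⟨hβ0, hβ1⟩ := hβ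
  refine ⟨(1 + 2 / (1 - β)) * 2 ^ β, by positivity, fun δ hδ s r _ _ hsr => ?_⟩
  simp_rw [mul_assoc, integral_const_mul, setIntegral_ite_sub_mem_Icc_mul]
  rw [inv_mul_le_iff₀ hδ, mul_comm δ]
  refine setIntegral_le_mul_of_abs_le hδ.le (volume_le_ofReal_of_subset_Icc inter_subset_right)
    (by positivity) fun u hu => ?_
  rw [abs_of_nonneg (by positivity)]
  exact (inv_mul_setIntegral_abs_sub_rpow_neg_le hβ0.le hβ1 hδ hsr hu.2 inter_subset_right).trans_eq
    (mul_assoc _ _ _)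
end

section
/- Let X, Y : [0,t] → ℝ^d be continuous functions, ε > 0, δ > 0, and define I(ε,δ) = ∫_{[0,t]^4} ψ_δ(u-s) ψ_δ(v-r) p_{|u-v|+2ε}(X_s - Y_r) dr ds du dv, where ψ_δ(w) = δ^{-1}1_{[0,δ]}(w). If d = 1, then I(ε,δ) → ∫_{[0,t]^2} p_{|s-r|}(X_s - Y_r) dr ds as (ε,δ) → (0,0). -/
open MeasureTheory Real Filter

/-- The one-dimensional heat kernel. -/
noncomputable def heatKernel1 (u x : ℝ) : ℝ :=
  (2 * π * u) ^ (-(1 : ℝ) / 2) * Real.exp (-x ^ 2 / (2 * u))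

/-!
For `0 < u ≠ v` the inner double integral is the average of
`p_{|u-v|+2ε}(X_s - Y_r)` over the box `[u-δ, u] × [v-δ, v]`, so it tends to
`p_{|u-v|}(X_u - Y_v)` by continuity of the heat kernel at positive times. For `ε ≥ 0` it is
bounded by `sup_x p_{|u-v|}(x) = (2π|u-v|)^{-1/2}`, which is integrable on `[0,t]²`, so dominated
convergence applies; continuous `X`, `Y` on `[0,t]` are first extended continuously to `ℝ`.
-/

open Set Metric Topology

theorem measurable_heatKernel1 : Measurable (Function.uncurry heatKernel1) := by
  unfold Function.uncurry heatKernel1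
  fun_prop

theorem heatKernel1_nonneg {w : ℝ} (hw : 0 ≤ w) (x : ℝ) : 0 ≤ heatKernel1 w x := by
  unfold heatKernel1; positivity

theorem heatKernel1_le_of_le {w w' : ℝ} (hw : 0 < w) (hww' : w ≤ w') (x : ℝ) :
    heatKernel1 w' x ≤ (2 * π * w) ^ (-(1 : ℝ) / 2) := by
  have hw' : 0 < w' := hw.trans_le hww'
  have hexp : exp (-x ^ 2 / (2 * w')) ≤ 1 :=
    exp_le_one_iff.2 (div_nonpos_of_nonpos_of_nonneg (by nlinarith [sq_nonneg x]) (by positivity))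
  calc heatKernel1 w' x ≤ (2 * π * w') ^ (-(1 : ℝ) / 2) := by
        unfold heatKernel1
        exact mul_le_of_le_one_right (by positivity) hexp
    _ ≤ (2 * π * w) ^ (-(1 : ℝ) / 2) :=
        rpow_le_rpow_of_nonpos (by positivity) (by gcongr) (by norm_num)

theorem continuousAt_heatKernel1 {w : ℝ} (hw : 0 < w) (x : ℝ) :
    ContinuousAt (Function.uncurry heatKernel1) (w, x) := by
  have h₁ : ContinuousAt (fun p : ℝ × ℝ => (2 * π * p.1) ^ (-(1 : ℝ) / 2)) (w, x) :=
    (continuousAt_fst.const_mul _).rpow_const (Or.inl (by positivity))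
  have h₂ : ContinuousAt (fun p : ℝ × ℝ => exp (-p.2 ^ 2 / (2 * p.1))) (w, x) :=
    ((continuousAt_snd.pow 2).neg.div (continuousAt_fst.const_mul _) (by simpa using hw.ne')).rexp
  exact h₁.mul h₂

noncomputable def psi (δ a : ℝ) : ℝ := if a ∈ Icc (0 : ℝ) δ then δ⁻¹ else 0

theorem psi_nonneg (δ a : ℝ) : 0 ≤ psi δ a := by
  unfold psi
  split_ifs with h
  · exact inv_nonneg.2 (h.1.trans h.2)
  · exact le_rfl

theorem psi_sub_eq_indicator (δ a x : ℝ) :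
    psi δ (a - x) = (Icc (a - δ) a).indicator (fun _ => δ⁻¹) x := by
  have hmem : a - x ∈ Icc 0 δ ↔ x ∈ Icc (a - δ) a := by
    simp only [mem_Icc]
    constructor <;> rintro ⟨h₁, h₂⟩ <;> constructor <;> linarith
  simp only [psi, indicator, hmem]

theorem integrable_psi_sub (δ a : ℝ) : Integrable (fun x => psi δ (a - x)) := by
  simp_rw [psi_sub_eq_indicator]
  exact (integrable_indicator_iff measurableSet_Icc).2 (integrableOn_const measure_Icc_lt_top.ne)

theorem integral_psi_sub {δ : ℝ} (hδ : 0 < δ) (a : ℝ) : ∫ x, psi δ (a - x) = 1 := by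
  simp_rw [psi_sub_eq_indicator]
  rw [integral_indicator_const _ measurableSet_Icc, volume_real_Icc_of_le (by linarith),
    smul_eq_mul, sub_sub_cancel, mul_inv_cancel₀ hδ.ne']

theorem norm_setIntegral_psi_mul_le {δ a B : ℝ} (hδ : 0 < δ) (s : Set ℝ) {f : ℝ → ℝ}
    (hf : ∀ x, ‖f x‖ ≤ B) : ‖∫ x in s, psi δ (a - x) * f x‖ ≤ B := by
  have hB : 0 ≤ B := (norm_nonneg _).trans (hf 0)
  have hψ : ∫ x in s, psi δ (a - x) ≤ 1 :=
    (setIntegral_le_integral (integrable_psi_sub δ a) (ae_of_all _ fun _ => psi_nonneg _ _)).trans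
      (integral_psi_sub hδ a).le
  calc ‖∫ x in s, psi δ (a - x) * f x‖ ≤ ∫ x in s, psi δ (a - x) * B := by
        refine norm_integral_le_of_norm_le ((integrable_psi_sub δ a).mul_const B).integrableOn
          (ae_of_all _ fun x => ?_)
        rw [norm_mul, Real.norm_of_nonneg (psi_nonneg _ _)]
        exact mul_le_mul_of_nonneg_left (hf x) (psi_nonneg _ _)
    _ = (∫ x in s, psi δ (a - x)) * B := integral_mul_const B _
    _ ≤ B := mul_le_of_le_one_left hB hψ

theorem setIntegral_psi_mul_eq_setAverage {δ a : ℝ} (hδ : 0 < δ) {s : Set ℝ}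
    (hsub : Icc (a - δ) a ⊆ s) (f : ℝ → ℝ) :
    ∫ x in s, psi δ (a - x) * f x = ⨍ x in Icc (a - δ) a, f x := by
  have hind : ∀ x, psi δ (a - x) * f x = (Icc (a - δ) a).indicator (fun y => δ⁻¹ * f y) x := by
    intro x
    rw [psi_sub_eq_indicator]
    by_cases hx : x ∈ Icc (a - δ) a <;> simp [hx]
  simp_rw [hind]
  rw [integral_indicator measurableSet_Icc, Measure.restrict_restrict measurableSet_Icc,
    inter_eq_left.2 hsub, integral_const_mul, setAverage_eq, volume_real_Icc_of_le (by linarith),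
    sub_sub_cancel, smul_eq_mul]

theorem measurable_psi (δ : ℝ) : Measurable (psi δ) :=
  Measurable.ite measurableSet_Icc measurable_const measurable_const

noncomputable def boxSmoothing (S : Set ℝ) (δ : ℝ) (K : ℝ → ℝ → ℝ) (u v : ℝ) : ℝ :=
  ∫ s in S, ∫ r in S, psi δ (u - s) * psi δ (v - r) * K s r

theorem boxSmoothing_eq (S : Set ℝ) (δ : ℝ) (K : ℝ → ℝ → ℝ) (u v : ℝ) :
    boxSmoothing S δ K u v = ∫ s in S, psi δ (u - s) * ∫ r in S, psi δ (v - r) * K s r := by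
  simp_rw [boxSmoothing, mul_assoc, integral_const_mul]

theorem norm_boxSmoothing_le {S : Set ℝ} {δ B : ℝ} (hδ : 0 < δ) {K : ℝ → ℝ → ℝ}
    (hK : ∀ s r, ‖K s r‖ ≤ B) (u v : ℝ) : ‖boxSmoothing S δ K u v‖ ≤ B := by
  rw [boxSmoothing_eq]
  exact norm_setIntegral_psi_mul_le hδ S fun s => norm_setIntegral_psi_mul_le hδ S (hK s)

theorem boxSmoothing_mem_closedBall {S : Set ℝ} {δ u v L η : ℝ} {K : ℝ → ℝ → ℝ} (hδ : 0 < δ)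
    (hu : Icc (u - δ) u ⊆ S) (hv : Icc (v - δ) v ⊆ S)
    (hK : Measurable (Function.uncurry K))
    (hKL : ∀ s ∈ Icc (u - δ) u, ∀ r ∈ Icc (v - δ) v, K s r ∈ closedBall L η) :
    boxSmoothing S δ K u v ∈ closedBall L η := by
  have hW₀ : ∀ a, volume (Icc (a - δ) a) ≠ 0 := fun a => by simp [hδ]
  have average_mem {f : ℝ → ℝ} {a : ℝ}
      (hf : AEStronglyMeasurable f (volume.restrict (Icc (a - δ) a)))
      (hfL : ∀ x ∈ Icc (a - δ) a, f x ∈ closedBall L η) :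
      ⨍ x in Icc (a - δ) a, f x ∈ closedBall L η :=
    (convex_closedBall L η).set_average_mem isClosed_closedBall (hW₀ a) measure_Icc_lt_top.ne
      (ae_restrict_of_forall_mem measurableSet_Icc hfL)
      (Integrable.of_bound hf (‖L‖ + η) ((ae_restrict_of_forall_mem measurableSet_Icc hfL).mono
        fun _ hx => norm_le_of_mem_closedBall hx))
  rw [boxSmoothing_eq]
  simp_rw [setIntegral_psi_mul_eq_setAverage hδ hv, setIntegral_psi_mul_eq_setAverage hδ hu]
  refine average_mem ?_ fun s hs => average_mem ?_ (hKL s hs)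
  · simp_rw [setAverage_eq]
    exact ((hK.stronglyMeasurable.integral_prod_right'
      (ν := volume.restrict (Icc (v - δ) v))).const_smul
        (volume.real (Icc (v - δ) v))⁻¹).aestronglyMeasurable
  · exact (hK.comp measurable_prodMk_left).aestronglyMeasurable

theorem stronglyMeasurable_boxSmoothing (S : Set ℝ) (δ : ℝ) {K : ℝ × ℝ → ℝ → ℝ → ℝ}
    (hK : Measurable fun q : (ℝ × ℝ) × ℝ × ℝ => K q.1 q.2.1 q.2.2) :
    StronglyMeasurable fun p : ℝ × ℝ => boxSmoothing S δ (K p) p.1 p.2 := by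
  have hF : Measurable fun z : ((ℝ × ℝ) × ℝ) × ℝ =>
      psi δ (z.1.1.1 - z.1.2) * psi δ (z.1.1.2 - z.2) * K z.1.1 z.1.2 z.2 := by
    have hK' := hK.comp (f := fun z : ((ℝ × ℝ) × ℝ) × ℝ => (z.1.1, z.1.2, z.2)) (by fun_prop)
    have hψ := measurable_psi δ
    fun_prop
  exact (hF.stronglyMeasurable.integral_prod_right' (ν := volume.restrict S)).integral_prod_right'

theorem eventually_Icc_sub_subset {S : Set ℝ} {u : ℝ} (hS : S ∈ 𝓝[≤] u) :
    ∀ᶠ δ in 𝓝[>] 0, Icc (u - δ) u ⊆ S := by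
  obtain ⟨l, hl, hlS⟩ := mem_nhdsLE_iff_exists_Ioc_subset.1 hS
  filter_upwards [nhdsWithin_le_nhds (eventually_lt_nhds (sub_pos.2 hl))] with δ hδ x hx
  exact hlS ⟨by linarith [hx.1], hx.2⟩

theorem tendsto_boxSmoothing {S : Set ℝ} {u v : ℝ} (hu : S ∈ 𝓝[≤] u) (hv : S ∈ 𝓝[≤] v)
    {K : ℝ → ℝ → ℝ → ℝ} (hK : ∀ ε, Measurable (Function.uncurry (K ε)))
    (hKc : ContinuousAt (fun p : ℝ × ℝ × ℝ => K p.1 p.2.1 p.2.2) (0, u, v)) :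
    Tendsto (fun ed : ℝ × ℝ => boxSmoothing S ed.2 (K ed.1) u v) (𝓝 0 ×ˢ 𝓝[>] 0)
      (𝓝 (K 0 u v)) := by
  rw [nhds_basis_closedBall.tendsto_right_iff]
  intro η hη
  obtain ⟨ρ, hρ, hρK⟩ := Metric.eventually_nhds_iff.1 (hKc.eventually (closedBall_mem_nhds _ hη))
  have hsmall : ∀ᶠ ed : ℝ × ℝ in 𝓝 0 ×ˢ 𝓝[>] 0, ed.1 ∈ ball 0 ρ ∧
      (ed.2 ∈ Ioi 0 ∧ ed.2 < ρ ∧ Icc (u - ed.2) u ⊆ S ∧ Icc (v - ed.2) v ⊆ S) :=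
    Eventually.prod_mk (ball_mem_nhds 0 hρ) (eventually_mem_nhdsWithin.and
      (((eventually_lt_nhds hρ).filter_mono nhdsWithin_le_nhds).and
        ((eventually_Icc_sub_subset hu).and (eventually_Icc_sub_subset hv))))
  filter_upwards [hsmall] with ⟨ε, δ⟩ ⟨hε, hδ, hδρ, hWu, hWv⟩
  refine boxSmoothing_mem_closedBall hδ hWu hWv (hK ε) fun s hs r hr =>
    mem_closedBall.2 (hρK (y := (ε, s, r)) ?_)
  have hδ₀ : 0 ≤ δ := le_of_lt hδ
  have hsu : dist s u ≤ δ := by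
    simpa using Real.dist_le_of_mem_Icc hs (right_mem_Icc.2 (by linarith))
  have hrv : dist r v ≤ δ := by
    simpa using Real.dist_le_of_mem_Icc hr (right_mem_Icc.2 (by linarith))
  simp only [Prod.dist_eq]
  exact max_lt (mem_ball.1 hε) (max_lt (by linarith) (by linarith))

theorem locallyIntegrable_abs_rpow {c : ℝ} (hc : -1 < c) :
    LocallyIntegrable (fun x : ℝ => |x| ^ c) := by
  refine locallyIntegrable_of_norm_le_rpow (C := 1) (α := -c) (by simp) (by simp; linarith)
    (ae_of_all _ fun x => ?_) (continuous_abs.measurable.pow_const c).aestronglyMeasurable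
  simp [abs_rpow_of_nonneg (abs_nonneg x)]

theorem integrable_abs_sub_rpow {c : ℝ} (hc : -1 < c) (a b a' b' : ℝ) :
    Integrable (fun p : ℝ × ℝ => |p.1 - p.2| ^ c)
      ((volume.restrict (Icc a b)).prod (volume.restrict (Icc a' b'))) := by
  -- the shear `(u, v) ↦ (u, v - u)` reduces this to the local integrability of `|x| ^ c`
  have hshear := measurePreserving_prod_sub (volume : Measure ℝ) (volume : Measure ℝ)
  have hint : IntegrableOn (fun q : ℝ × ℝ => |q.2| ^ c) (Icc a b ×ˢ Icc (a' - b) (b' - a)) := by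
    rw [IntegrableOn, Measure.volume_eq_prod, ← Measure.prod_restrict]
    exact ((locallyIntegrable_abs_rpow hc).integrableOn_isCompact isCompact_Icc).comp_snd _
  rw [Measure.volume_eq_prod, ← hshear.integrableOn_comp_preimage
    (MeasurableEquiv.shearSubRight ℝ).measurableEmbedding] at hint
  rw [Measure.prod_restrict]
  refine (hint.mono_set fun p hp => ?_).congr_fun (fun p _ => ?_)
    (measurableSet_Icc.prod measurableSet_Icc)
  · simp only [mem_preimage, mem_prod, mem_Icc] at hp ⊢
    refine ⟨hp.1, ?_, ?_⟩ <;> linarith [hp.1.1, hp.1.2, hp.2.1, hp.2.2]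
  · simp [abs_sub_comm]

theorem ae_mem_Ioc_and_ne {a b : ℝ} :
    ∀ᵐ p ∂(volume.restrict (Icc a b)).prod (volume.restrict (Icc a b)),
      p.1 ∈ Ioc a b ∧ p.2 ∈ Ioc a b ∧ p.1 ≠ p.2 := by
  have hIoc : ∀ᵐ x ∂volume.restrict (Icc a b), x ∈ Ioc a b := by
    filter_upwards [ae_restrict_mem measurableSet_Icc, Measure.ae_ne _ a] with x hx hxa
    exact ⟨lt_of_le_of_ne hx.1 (Ne.symm hxa), hx.2⟩
  rw [Measure.ae_prod_iff_ae_ae (by measurability)]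
  filter_upwards [hIoc] with x hx
  filter_upwards [hIoc, Measure.ae_ne _ x] with y hy hyx
  exact ⟨hx, hy, hyx.symm⟩

theorem norm_boxSmoothing_heatKernel1_le {S : Set ℝ} {δ ε u v : ℝ} (hδ : 0 < δ) (hε : 0 ≤ ε)
    (huv : u ≠ v) (X Y : ℝ → ℝ) :
    ‖boxSmoothing S δ (fun s r => heatKernel1 (|u - v| + 2 * ε) (X s - Y r)) u v‖ ≤
      (2 * π * |u - v|) ^ (-(1 : ℝ) / 2) := by
  have hw : 0 < |u - v| := abs_pos.2 (sub_ne_zero.2 huv)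
  refine norm_boxSmoothing_le hδ (fun s r => ?_) u v
  rw [Real.norm_of_nonneg (heatKernel1_nonneg (by positivity) _)]
  exact heatKernel1_le_of_le hw (by linarith) _

theorem tendsto_boxSmoothing_heatKernel1 {S : Set ℝ} {u v : ℝ} (hu : S ∈ 𝓝[≤] u)
    (hv : S ∈ 𝓝[≤] v) (huv : u ≠ v) {X Y : ℝ → ℝ} (hX : Continuous X) (hY : Continuous Y) :
    Tendsto (fun ed : ℝ × ℝ =>
        boxSmoothing S ed.2 (fun s r => heatKernel1 (|u - v| + 2 * ed.1) (X s - Y r)) u v)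
      (𝓝 0 ×ˢ 𝓝[>] 0) (𝓝 (heatKernel1 |u - v| (X u - Y v))) := by
  have hw : 0 < |u - v| + 2 * 0 := by simpa using abs_pos.2 (sub_ne_zero.2 huv)
  have hKc : ContinuousAt
      (fun p : ℝ × ℝ × ℝ => heatKernel1 (|u - v| + 2 * p.1) (X p.2.1 - Y p.2.2)) (0, u, v) :=
    ContinuousAt.comp (g := Function.uncurry heatKernel1)
      (f := fun p : ℝ × ℝ × ℝ => (|u - v| + 2 * p.1, X p.2.1 - Y p.2.2))
      (continuousAt_heatKernel1 hw _) (Continuous.continuousAt (by fun_prop))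
  simpa using tendsto_boxSmoothing (K := fun ε s r => heatKernel1 (|u - v| + 2 * ε) (X s - Y r))
    hu hv (fun ε => measurable_heatKernel1.comp
      (f := fun q : ℝ × ℝ => (|u - v| + 2 * ε, X q.1 - Y q.2)) (by fun_prop))
    hKc

theorem tendsto_integral_boxSmoothing_heatKernel1 {t : ℝ} {X Y : ℝ → ℝ} (hX : Continuous X)
    (hY : Continuous Y) :
    Tendsto (fun ed : ℝ × ℝ => ∫ u in Icc 0 t, ∫ v in Icc 0 t,
        boxSmoothing (Icc 0 t) ed.2 (fun s r => heatKernel1 (|u - v| + 2 * ed.1) (X s - Y r)) u v)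
      (𝓝[>] 0 ×ˢ 𝓝[>] 0)
      (𝓝 (∫ s in Icc 0 t, ∫ r in Icc 0 t, heatKernel1 |s - r| (X s - Y r))) := by
  set P := (volume.restrict (Icc (0 : ℝ) t)).prod (volume.restrict (Icc (0 : ℝ) t))
  set F : ℝ × ℝ → ℝ × ℝ → ℝ := fun ed p => boxSmoothing (Icc 0 t) ed.2
    (fun s r => heatKernel1 (|p.1 - p.2| + 2 * ed.1) (X s - Y r)) p.1 p.2
  set bound : ℝ × ℝ → ℝ := fun p => (2 * π * |p.1 - p.2|) ^ (-(1 : ℝ) / 2)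
  have hbound : Integrable bound P := by
    simpa [bound, mul_rpow, abs_nonneg, pi_pos.le] using
      (integrable_abs_sub_rpow (c := -(1 : ℝ) / 2) (by norm_num) 0 t 0 t).const_mul
        ((2 * π) ^ (-(1 : ℝ) / 2))
  have hF_meas : ∀ ed, AEStronglyMeasurable (F ed) P := fun ed =>
    (stronglyMeasurable_boxSmoothing _ _ (measurable_heatKernel1.comp
      (f := fun q : (ℝ × ℝ) × ℝ × ℝ => (|q.1.1 - q.1.2| + 2 * ed.1, X q.2.1 - Y q.2.2))
      (by fun_prop))).aestronglyMeasurable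
  have hF_le : ∀ ed ∈ Ioi (0 : ℝ) ×ˢ Ioi (0 : ℝ), ∀ᵐ p ∂P, ‖F ed p‖ ≤ bound p := by
    intro ed hed
    filter_upwards [ae_mem_Ioc_and_ne] with p hp
    exact norm_boxSmoothing_heatKernel1_le hed.2 (le_of_lt hed.1) hp.2.2 X Y
  have hF_lim : ∀ᵐ p ∂P, Tendsto (F · p) (𝓝[>] 0 ×ˢ 𝓝[>] 0)
      (𝓝 (heatKernel1 |p.1 - p.2| (X p.1 - Y p.2))) := by
    filter_upwards [ae_mem_Ioc_and_ne] with p hp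
    exact (tendsto_boxSmoothing_heatKernel1 (Icc_mem_nhdsLE_of_mem hp.1)
      (Icc_mem_nhdsLE_of_mem hp.2.1) hp.2.2 hX hY).mono_left
        (prod_mono nhdsWithin_le_nhds le_rfl)
  have hlim_int : Integrable (fun p : ℝ × ℝ => heatKernel1 |p.1 - p.2| (X p.1 - Y p.2)) P := by
    refine hbound.mono' (measurable_heatKernel1.comp
      (f := fun p : ℝ × ℝ => (|p.1 - p.2|, X p.1 - Y p.2)) (by fun_prop)).aestronglyMeasurable ?_
    filter_upwards [ae_mem_Ioc_and_ne] with p hp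
    have hw : 0 < |p.1 - p.2| := abs_pos.2 (sub_ne_zero.2 hp.2.2)
    rw [Real.norm_of_nonneg (heatKernel1_nonneg hw.le _)]
    exact heatKernel1_le_of_le hw le_rfl _
  rw [← integral_prod _ hlim_int]
  have hed : ∀ᶠ ed in 𝓝[>] (0 : ℝ) ×ˢ 𝓝[>] (0 : ℝ), ed ∈ Ioi (0 : ℝ) ×ˢ Ioi (0 : ℝ) := by
    rw [← nhdsWithin_prod_eq]; exact eventually_mem_nhdsWithin
  refine (tendsto_integral_filter_of_dominated_convergence bound (.of_forall hF_meas)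
    (hed.mono hF_le) hbound hF_lim).congr' (hed.mono fun ed hed => ?_)
  exact integral_prod _ (hbound.mono' (hF_meas ed) (hF_le ed hed))

theorem ContinuousOn.exists_continuous_eqOn_Icc {α β : Type*} [LinearOrder α]
    [TopologicalSpace α] [OrderTopology α] [TopologicalSpace β] {a b : α} (hab : a ≤ b)
    {f : α → β} (hf : ContinuousOn f (Icc a b)) :
    ∃ g : α → β, Continuous g ∧ EqOn g f (Icc a b) :=
  ⟨IccExtend hab ((Icc a b).domRestrict f),
    continuous_IccExtend_iff.2 (continuousOn_iff_continuous_domRestrict.1 hf),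
    fun _ hx => IccExtend_of_mem hab _ hx⟩

/-- As `(ε,δ) → (0,0)`, the smoothed quadruple integral converges to
`∫_{[0,t]²} p_{|s-r|}(X_s - Y_r) dr ds` (case `d = 1`). -/
theorem smoothed_integral_tendsto (t : ℝ) (ht : 0 < t) (X Y : ℝ → ℝ)
    (hX : ContinuousOn X (Set.Icc 0 t)) (hY : ContinuousOn Y (Set.Icc 0 t)) :
    Tendsto
      (fun ed : ℝ × ℝ =>
        ∫ u in Set.Icc (0 : ℝ) t, ∫ v in Set.Icc (0 : ℝ) t,
          ∫ s in Set.Icc (0 : ℝ) t, ∫ r in Set.Icc (0 : ℝ) t,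
            (if u - s ∈ Set.Icc (0 : ℝ) ed.2 then ed.2⁻¹ else 0) *
              (if v - r ∈ Set.Icc (0 : ℝ) ed.2 then ed.2⁻¹ else 0) *
                heatKernel1 (|u - v| + 2 * ed.1) (X s - Y r))
      (nhdsWithin (0, 0) (Set.Ioi (0 : ℝ) ×ˢ Set.Ioi (0 : ℝ)))
      (nhds (∫ s in Set.Icc (0 : ℝ) t, ∫ r in Set.Icc (0 : ℝ) t,
        heatKernel1 |s - r| (X s - Y r))) := by
  obtain ⟨X', hX', hXX'⟩ := hX.exists_continuous_eqOn_Icc ht.le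
  obtain ⟨Y', hY', hYY'⟩ := hY.exists_continuous_eqOn_Icc ht.le
  have hcongr {f g : ℝ → ℝ → ℝ} (hfg : ∀ s ∈ Icc 0 t, ∀ r ∈ Icc 0 t, f s r = g s r) :
      ∫ s in Icc 0 t, ∫ r in Icc 0 t, f s r = ∫ s in Icc 0 t, ∫ r in Icc 0 t, g s r :=
    setIntegral_congr_fun measurableSet_Icc fun s hs =>
      setIntegral_congr_fun measurableSet_Icc fun r hr => hfg s hs r hr
  rw [nhdsWithin_prod_eq, hcongr fun s hs r hr => by rw [← hXX' hs, ← hYY' hr]]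
  refine (tendsto_integral_boxSmoothing_heatKernel1 hX' hY').congr fun ed => ?_
  congr! 4 with u v
  exact hcongr fun s hs r hr => by simp only [hXX' hs, hYY' hr]; rfl
end
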